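/- On 𝔤₂₄ = 𝔥₃ × 𝔥₃ (brackets [e₁,e₄]=e₆, [e₂,e₃]=e₅) with ω = e¹∧e⁶ + e²∧e⁵ + e³∧e⁴, the almost complex structure J with J(e₁) = ψ₁₁e₁ − ((1+ψ₁₁²)/ψ₁₂)e₂, J(e₂) = ψ₁₂e₁ − ψ₁₁e₂, J(e₃) = ((ψ₁₁²−1)/(2ψ₁₁))e₃ − ((2ψ₁₁²+ψ₁₁⁴+1)/(2ψ₁₁ψ₁₂²))e₄, J(e₄) = (ψ₁₂²/(2ψ₁₁))e₃ − ((ψ₁₁²−1)/(2ψ₁₁))e₄, J(e₅) = ψ₁₁e₅ + ((1+ψ₁₁²)/ψ₁₂)e₆, J(e₆) = −ψ₁₂e₅ − ψ₁₁e₆, with ψ₁₁ ≠ 0, ψ₁₂ ≠ 0, satisfies J² = −Id, is integrable, and is compatible with ω. -/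

import Mathlib

noncomputable section

/-- The underlying space ℝ⁶ of 𝔤₂₄ = 𝔥₃ × 𝔥₃. -/
abbrev V24 : Type := Fin 6 → ℝ

/-- Bracket of 𝔤₂₄: [e₁,e₄] = e₆, [e₂,e₃] = e₅. -/
def br24 (X Y : V24) : V24 :=
  ![0, 0, 0, 0, X 1 * Y 2 - X 2 * Y 1, X 0 * Y 3 - X 3 * Y 0]

/-- ω = e¹∧e⁶ + e²∧e⁵ + e³∧e⁴. -/
def om24 (X Y : V24) : ℝ :=
  (X 0 * Y 5 - X 5 * Y 0) + (X 1 * Y 4 - X 4 * Y 1) + (X 2 * Y 3 - X 3 * Y 2)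

/-- The almost complex structure J on 𝔤₂₄ with parameters ψ₁₁ ≠ 0, ψ₁₂ ≠ 0:
J(e₁) = ψ₁₁e₁ − ((1+ψ₁₁²)/ψ₁₂)e₂, J(e₂) = ψ₁₂e₁ − ψ₁₁e₂,
J(e₃) = ((ψ₁₁²−1)/(2ψ₁₁))e₃ − ((2ψ₁₁²+ψ₁₁⁴+1)/(2ψ₁₁ψ₁₂²))e₄,
J(e₄) = (ψ₁₂²/(2ψ₁₁))e₃ − ((ψ₁₁²−1)/(2ψ₁₁))e₄,
J(e₅) = ψ₁₁e₅ + ((1+ψ₁₁²)/ψ₁₂)e₆, J(e₆) = −ψ₁₂e₅ − ψ₁₁e₆. -/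
def J24 (p q : ℝ) (X : V24) : V24 :=
  ![p * X 0 + q * X 1,
    -((1 + p ^ 2) / q) * X 0 - p * X 1,
    ((p ^ 2 - 1) / (2 * p)) * X 2 + (q ^ 2 / (2 * p)) * X 3,
    -((2 * p ^ 2 + p ^ 4 + 1) / (2 * p * q ^ 2)) * X 2 - ((p ^ 2 - 1) / (2 * p)) * X 3,
    p * X 4 - q * X 5,
    ((1 + p ^ 2) / q) * X 4 - p * X 5]

/-!
Relative to the splitting `⟨e₁,e₂⟩ ⊕ ⟨e₃,e₄⟩ ⊕ ⟨e₅,e₆⟩`, `J` is block diagonal with traceless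
2 × 2 blocks `[[a, b], [-c, -a]]`, `[[a', b'], [-c', -a']]` and `[[a, -b], [c, -a]]`. A traceless
2 × 2 block squares to `-1` exactly when its determinant is `1`, which gives `J² = -1`; the same
determinant conditions make `ω` `J`-invariant, `ω` being the area form on the middle block and a
pairing of the two outer blocks. The Nijenhuis tensor takes values in `⟨e₅,e₆⟩`, and its
coefficients vanish once the middle block is obtained from the first one by `2a a' = a² - 1`,
`2a b' = b²`, `2a c' = c²`; these relations also force the middle block to have determinant `1`.
-/

def blockJ (a b c a' b' c' : ℝ) (X : V24) : V24 :=
  ![a * X 0 + b * X 1, -c * X 0 - a * X 1,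
    a' * X 2 + b' * X 3, -c' * X 2 - a' * X 3,
    a * X 4 - b * X 5, c * X 4 - a * X 5]

theorem J24_eq_blockJ (p q : ℝ) :
    J24 p q = blockJ p q ((1 + p ^ 2) / q) ((p ^ 2 - 1) / (2 * p)) (q ^ 2 / (2 * p))
      ((2 * p ^ 2 + p ^ 4 + 1) / (2 * p * q ^ 2)) :=
  rfl

section
variable {a b c a' b' c' : ℝ}

theorem blockJ_blockJ (h : a ^ 2 - b * c = -1) (h' : a' ^ 2 - b' * c' = -1) (X : V24) :
    blockJ a b c a' b' c' (blockJ a b c a' b' c' X) = -X := by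
  funext i
  fin_cases i <;>
    simp only [blockJ, Fin.isValue, neg_mul, Matrix.cons_val_zero, Matrix.cons_val_one,
      Matrix.cons_val, Fin.zero_eta, Fin.mk_one, Fin.reduceFinMk, Pi.neg_apply]
  · linear_combination X 0 * h
  · linear_combination X 1 * h
  · linear_combination X 2 * h'
  · linear_combination X 3 * h'
  · linear_combination X 4 * h
  · linear_combination X 5 * h

theorem om24_blockJ (h : a ^ 2 - b * c = -1) (h' : a' ^ 2 - b' * c' = -1) (X Y : V24) :
    om24 (blockJ a b c a' b' c' X) (blockJ a b c a' b' c' Y) = om24 X Y := by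
  simp only [om24, blockJ, Fin.isValue, neg_mul, Matrix.cons_val_zero, Matrix.cons_val,
    Matrix.cons_val_one]
  linear_combination -(X 0 * Y 5 - X 5 * Y 0 + X 1 * Y 4 - X 4 * Y 1) * h
    - (X 2 * Y 3 - X 3 * Y 2) * h'

theorem ne_zero_of_two_mul_mul_eq_sq_sub_one (hA : 2 * a * a' = a ^ 2 - 1) : a ≠ 0 := by
  rintro rfl
  norm_num at hA

theorem middle_block_sq_sub_mul (h : a ^ 2 - b * c = -1) (hA : 2 * a * a' = a ^ 2 - 1)
    (hB : 2 * a * b' = b ^ 2) (hC : 2 * a * c' = c ^ 2) : a' ^ 2 - b' * c' = -1 := by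
  have ha := ne_zero_of_two_mul_mul_eq_sq_sub_one hA
  refine mul_left_cancel₀ (pow_ne_zero 2 (mul_ne_zero two_ne_zero ha)) ?_
  linear_combination (2 * a * a' + a ^ 2 - 1) * hA - 2 * a * c' * hB - b ^ 2 * hC
    + (a ^ 2 + 1 + b * c) * h

theorem nijenhuis_blockJ (h : a ^ 2 - b * c = -1) (hA : 2 * a * a' = a ^ 2 - 1)
    (hB : 2 * a * b' = b ^ 2) (hC : 2 * a * c' = c ^ 2) (X Y : V24) :
    br24 (blockJ a b c a' b' c' X) (blockJ a b c a' b' c' Y) - br24 X Y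
      - blockJ a b c a' b' c' (br24 (blockJ a b c a' b' c' X) Y)
      - blockJ a b c a' b' c' (br24 X (blockJ a b c a' b' c' Y)) = 0 := by
  have ha := ne_zero_of_two_mul_mul_eq_sq_sub_one hA
  have hD₁ : c * (a' - a) + b * c' = 0 := by
    refine mul_left_cancel₀ (mul_ne_zero two_ne_zero ha) ?_
    linear_combination c * hA + b * hC - c * h
  have hD₂ : c * b' - b * (a - a') = 0 := by
    refine mul_left_cancel₀ (mul_ne_zero two_ne_zero ha) ?_
    linear_combination c * hB + b * hA - b * h
  funext i
  fin_cases i <;>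
    simp only [br24, blockJ, Fin.isValue, neg_mul, Matrix.cons_val_zero, Matrix.cons_val_one,
      Matrix.cons_val, Matrix.sub_cons, Matrix.head_cons, Matrix.tail_cons, Matrix.zero_empty,
      sub_self, mul_zero, add_zero, Fin.zero_eta, Fin.mk_one, Fin.reduceFinMk, Pi.sub_apply,
      Pi.zero_apply]
  -- the coefficients of `N` on `Xᵢ Yⱼ - Xⱼ Yᵢ` (i ∈ {0,1}, j ∈ {2,3}) are hA, hB, hC, hD₁, hD₂
  · linear_combination -(X 0 * Y 2 - X 2 * Y 0) * hD₁ - (X 0 * Y 3 - X 3 * Y 0) * hD₂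
      - (X 1 * Y 2 - X 2 * Y 1) * hA - (X 1 * Y 3 - X 3 * Y 1) * hB
  · linear_combination -(X 0 * Y 2 - X 2 * Y 0) * hC - (X 0 * Y 3 - X 3 * Y 0) * hA
      - (X 1 * Y 2 - X 2 * Y 1) * hD₁ - (X 1 * Y 3 - X 3 * Y 1) * hD₂

end

/-- for ψ₁₁ ≠ 0 and ψ₁₂ ≠ 0, J satisfies J² = −Id, is integrable,
and is compatible with ω on 𝔤₂₄. -/
theorem g24_J_complex_compatible (p q : ℝ) (hp : p ≠ 0) (hq : q ≠ 0) :
    (∀ X : V24, J24 p q (J24 p q X) = -X) ∧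
    (∀ X Y : V24,
      br24 (J24 p q X) (J24 p q Y) - br24 X Y
        - J24 p q (br24 (J24 p q X) Y) - J24 p q (br24 X (J24 p q Y)) = 0) ∧
    (∀ X Y : V24, om24 (J24 p q X) (J24 p q Y) = om24 X Y) := by
  have h : p ^ 2 - q * ((1 + p ^ 2) / q) = -1 := by field_simp; ring
  have hA : 2 * p * ((p ^ 2 - 1) / (2 * p)) = p ^ 2 - 1 := by field_simp
  have hB : 2 * p * (q ^ 2 / (2 * p)) = q ^ 2 := by field_simp
  have hC : 2 * p * ((2 * p ^ 2 + p ^ 4 + 1) / (2 * p * q ^ 2)) = ((1 + p ^ 2) / q) ^ 2 := by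
    field_simp; ring
  have h' := middle_block_sq_sub_mul h hA hB hC
  rw [J24_eq_blockJ]
  exact ⟨blockJ_blockJ h h', nijenhuis_blockJ h hA hB hC, om24_blockJ h h'⟩
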